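/- arXiv:1202.1079 — 2 statements merged into one kernel-verified Lean document; each statement's English description precedes it below -/
import Mathlib

section
/- Let u ∈ C²(K̄) on K = {x ∈ ℝ² : |x| ≥ r} with u > 0, u(x) → 0 as |x| → ∞, and suppose −Δu + W·u = λu on K where W(x) ≥ ω²|x|² and λ < ω²r². Then for each α > 0 with r² ≥ (λ + √(λ² + 4α²ω²))/(2ω²), one has u(x) ≤ ‖u‖_{L^∞(∂K)}·(r/|x|)^α for all x ∈ K. -/
open Real Filter


lemma secondDerivTest {g : ℝ → ℝ} (hmax : IsLocalMax g 0)
    (hd : ∀ᶠ t in nhds (0:ℝ), DifferentiableAt ℝ g t)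
    (hd2 : DifferentiableAt ℝ (deriv g) 0) :
    deriv (deriv g) 0 ≤ 0 := by
  by_contra hc
  push_neg at hc
  set c := deriv (deriv g) 0 with hcdef
  have h0 : deriv g 0 = 0 := hmax.deriv_eq_zero
  have hda : HasDerivAt (deriv g) c 0 := hd2.hasDerivAt
  have hslope := hasDerivAt_iff_tendsto_slope.1 hda
  have hev : ∀ᶠ t in nhdsWithin (0:ℝ) {0}ᶜ, c/2 < slope (deriv g) 0 t :=
    hslope (Ioi_mem_nhds (by linarith))
  have hev2 : ∀ᶠ t in nhdsWithin (0:ℝ) (Set.Ioi 0), 0 < deriv g t := by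
    have h1 : ∀ᶠ t in nhdsWithin (0:ℝ) (Set.Ioi 0), c/2 < slope (deriv g) 0 t := by
      refine hev.filter_mono (nhdsWithin_mono _ ?_)
      intro x hx; simp at hx ⊢; exact ne_of_gt hx
    have h2 : ∀ᶠ t in nhdsWithin (0:ℝ) (Set.Ioi 0), (0:ℝ) < t :=
      eventually_mem_nhdsWithin
    filter_upwards [h1, h2] with t ht1 ht2
    have hs : slope (deriv g) 0 t = deriv g t / t := by
      simp [slope_def_field, h0]
    rw [hs] at ht1
    have hdp : 0 < deriv g t / t := lt_trans (by linarith) ht1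
    rcases div_pos_iff.1 hdp with ⟨h, _⟩ | ⟨_, h⟩
    · exact h
    · linarith
  have hall : ∀ᶠ t in nhdsWithin (0:ℝ) (Set.Ioi 0),
      DifferentiableAt ℝ g t ∧ g t ≤ g 0 ∧ 0 < deriv g t := by
    filter_upwards [eventually_nhdsWithin_of_eventually_nhds (hd.and hmax), hev2] with t h1 h2
    exact ⟨h1.1, h1.2, h2⟩
  rw [eventually_iff, mem_nhdsGT_iff_exists_Ioc_subset] at hall
  obtain ⟨δ, hδ, hsub⟩ := hall
  have hδ0 : (0:ℝ) < δ := hδ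
  have hdiff : ∀ x ∈ Set.Icc (0:ℝ) δ, DifferentiableAt ℝ g x := by
    intro x hx
    rcases eq_or_lt_of_le hx.1 with h | h
    · rw [← h]; exact hd.self_of_nhds
    · exact (hsub ⟨h, hx.2⟩).1
  have hmono : StrictMonoOn g (Set.Icc 0 δ) := by
    apply strictMonoOn_of_deriv_pos (convex_Icc 0 δ)
    · exact fun x hx => (hdiff x hx).continuousAt.continuousWithinAt
    · intro x hx
      rw [interior_Icc] at hx
      exact (hsub ⟨hx.1, hx.2.le⟩).2.2
  have := hmono (Set.left_mem_Icc.2 hδ0.le) (Set.right_mem_Icc.2 hδ0.le) hδ0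
  have := (hsub ⟨hδ0, le_refl δ⟩).2.1
  linarith

lemma rpow_line (a b β : ℝ) (hs : 0 < a^2+b^2) :
    (∀ᶠ t : ℝ in nhds 0, DifferentiableAt ℝ (fun t => ((a+t)^2+b^2) ^ β) t) ∧
    DifferentiableAt ℝ (deriv (fun t : ℝ => ((a+t)^2+b^2) ^ β)) 0 ∧
    deriv (deriv (fun t : ℝ => ((a+t)^2+b^2) ^ β)) 0 =
      β * ((β-1) * (a^2+b^2)^(β-2) * (2*a) * (2*a) + (a^2+b^2)^(β-1) * 2) := by
  set q : ℝ → ℝ := fun t => (a+t)^2+b^2 with hq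
  have hqd : ∀ t : ℝ, HasDerivAt q (2*(a+t)) t := by
    intro t
    have h1 : HasDerivAt (fun t : ℝ => a + t) 1 t := (hasDerivAt_id t).const_add a
    have := (h1.pow 2).add_const (b^2)
    rw [hq]; simpa [mul_comm] using this
  have hqc : Continuous q := by fun_prop
  have hqpos : ∀ᶠ t : ℝ in nhds 0, 0 < q t := by
    have : q 0 = a^2+b^2 := by simp [hq]
    have h := hqc.continuousAt (x := (0:ℝ))
    rw [ContinuousAt, this] at h
    exact h.eventually (eventually_gt_nhds hs)
  have key : ∀ t : ℝ, 0 < q t →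
      HasDerivAt (fun t => (q t) ^ β) (β * (q t)^(β-1) * (2*(a+t))) t := by
    intro t ht
    have := (hqd t).rpow_const (p := β) (Or.inl (ne_of_gt ht))
    convert this using 1
    ring
  have hev : (deriv (fun t => (q t) ^ β)) =ᶠ[nhds (0:ℝ)]
      fun t => β * (q t)^(β-1) * (2*(a+t)) := by
    filter_upwards [hqpos] with t ht
    exact (key t ht).deriv
  set φ : ℝ → ℝ := fun t => β * (q t)^(β-1) * (2*(a+t)) with hφ
  have hφd : HasDerivAt φ
      (β * ((β-1) * (a^2+b^2)^(β-2) * (2*a)) * (2*a) + β * (a^2+b^2)^(β-1) * 2) 0 := by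
    have hq0 : q 0 = a^2+b^2 := by simp [hq]
    have h1 : HasDerivAt (fun t => (q t)^(β-1)) ((β-1) * (a^2+b^2)^(β-2) * (2*a)) 0 := by
      have := (hqd 0).rpow_const (p := β - 1) (Or.inl (by rw [hq0]; exact ne_of_gt hs))
      rw [hq0] at this
      have he : β - 1 - 1 = β - 2 := by ring
      rw [he] at this
      convert this using 1
      ring
    have h2 : HasDerivAt (fun t : ℝ => 2*(a+t)) 2 0 := by
      simpa using (((hasDerivAt_id (0:ℝ)).const_add a).const_mul 2)
    have := ((h1.const_mul β).fun_mul h2)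
    simp only [hq0] at this
    exact this.congr_deriv (by ring)
  constructor
  · filter_upwards [hqpos] with t ht
    exact (key t ht).differentiableAt
  constructor
  · exact hev.differentiableAt_iff.2 hφd.differentiableAt
  · rw [hev.deriv_eq, hφd.deriv]
    ring

lemma lineFacts {E : Type*} [NormedAddCommGroup E] [NormedSpace ℝ E]
    {w : E → ℝ} {x v : E} (hw : ∀ᶠ y in nhds x, ContDiffAt ℝ 2 w y) :
    (∀ᶠ t : ℝ in nhds 0, DifferentiableAt ℝ (fun t : ℝ => w (x + t • v)) t) ∧
    DifferentiableAt ℝ (deriv (fun t : ℝ => w (x + t • v))) 0 ∧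
    deriv (deriv (fun t : ℝ => w (x + t • v))) 0 = fderiv ℝ (fun y => fderiv ℝ w y v) x v := by
  set L : ℝ → E := fun t => x + t • v with hL
  have hLd : ∀ t : ℝ, HasDerivAt L v t := by
    intro t
    have := ((hasDerivAt_id t).smul_const v).const_add x
    rw [hL]; simpa using this
  have hLc : Continuous L := by continuity
  have hL0 : L 0 = x := by simp [hL]
  have hevt : ∀ᶠ t : ℝ in nhds 0, ContDiffAt ℝ 2 w (L t) := by
    have h := hLc.continuousAt (x := (0:ℝ))
    rw [ContinuousAt, hL0] at h
    exact h.eventually hw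
  have hA : ∀ᶠ t : ℝ in nhds 0, HasDerivAt (fun t : ℝ => w (x + t • v))
      (fderiv ℝ w (L t) v) t := by
    filter_upwards [hevt] with t ht
    have hdw : DifferentiableAt ℝ w (L t) := ht.differentiableAt (by norm_num)
    exact hdw.hasFDerivAt.comp_hasDerivAt t (hLd t)
  have hAeq : (deriv (fun t : ℝ => w (x + t • v))) =ᶠ[nhds (0:ℝ)]
      fun t => fderiv ℝ w (L t) v := by
    filter_upwards [hA] with t ht using ht.deriv
  have hw2 : ContDiffAt ℝ 2 w x := hw.self_of_nhds
  have hfd : ContDiffAt ℝ 1 (fderiv ℝ w) x := hw2.fderiv_right (by norm_num)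
  have hdd : DifferentiableAt ℝ (fderiv ℝ w) x := hfd.differentiableAt (by norm_num)
  set clm := ContinuousLinearMap.apply ℝ ℝ v with hclm
  have hF : HasFDerivAt (fun y => fderiv ℝ w y v)
      (clm.comp (fderiv ℝ (fderiv ℝ w) x)) x :=
    (clm.hasFDerivAt).comp x hdd.hasFDerivAt
  have hcomp : HasDerivAt (fun t => fderiv ℝ w (L t) v)
      ((clm.comp (fderiv ℝ (fderiv ℝ w) x)) v) 0 := by
    have hF' : HasFDerivAt (fun y => fderiv ℝ w y v)
        (clm.comp (fderiv ℝ (fderiv ℝ w) x)) (L 0) := by rwa [hL0]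
    exact hF'.comp_hasDerivAt 0 (hLd 0)
  refine ⟨?_, ?_, ?_⟩
  · filter_upwards [hA] with t ht using ht.differentiableAt
  · exact hAeq.differentiableAt_iff.2 hcomp.differentiableAt
  · rw [hAeq.deriv_eq, hcomp.deriv, hF.fderiv]


lemma perDirection {E : Type*} [NormedAddCommGroup E] [NormedSpace ℝ E]
    {u f : E → ℝ} {x v : E} {C aa bb α : ℝ} (hα : 0 < α)
    (hs : 0 < aa^2+bb^2)
    (hnorm : ∀ t : ℝ, f (x + t • v) = C * ((aa+t)^2+bb^2) ^ (-α/2 : ℝ))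
    (hCD : ∀ᶠ y in nhds x, ContDiffAt ℝ 2 u y)
    (hmax : IsLocalMax (fun y => u y - f y) x) :
    fderiv ℝ (fun y => fderiv ℝ u y v) x v ≤
      C * ((-α/2) * ((-α/2-1) * (aa^2+bb^2)^(-α/2-2 : ℝ) * (2*aa) * (2*aa)
        + (aa^2+bb^2)^(-α/2-1 : ℝ) * 2)) := by
  obtain ⟨hdU, hd2U, heqU⟩ := lineFacts (v := v) hCD
  obtain ⟨hdH, hd2H, hvalH⟩ := rpow_line aa bb (-α/2) hs
  set h : ℝ → ℝ := fun t => ((aa+t)^2+bb^2) ^ (-α/2 : ℝ) with hh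
  set gu : ℝ → ℝ := fun t => u (x + t • v) with hgu
  set gw : ℝ → ℝ := fun t => u (x + t • v) - f (x + t • v) with hgwdef
  have hgw : gw = fun t => gu t - C * h t := by
    funext t; simp only [hgwdef, hgu, hh, hnorm t]
  have hmaxgw : IsLocalMax gw 0 := by
    have hLc : Continuous (fun t : ℝ => x + t • v) := by continuity
    have h0 : ContinuousAt (fun t : ℝ => x + t • v) 0 := hLc.continuousAt
    rw [ContinuousAt] at h0
    simp only [zero_smul, add_zero] at h0
    have := h0.eventually hmax
    refine this.mono fun t ht => ?_
    simpa [hgwdef] using ht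
  have hdCH : ∀ᶠ t : ℝ in nhds 0, DifferentiableAt ℝ (fun t => C * h t) t :=
    hdH.mono fun t ht => ht.const_mul C
  have hdGW : ∀ᶠ t : ℝ in nhds 0, DifferentiableAt ℝ gw t := by
    filter_upwards [hdU, hdCH] with t h1 h2
    rw [hgw]; exact h1.sub h2
  have hderiv_eq : deriv gw =ᶠ[nhds (0:ℝ)] fun t => deriv gu t - C * deriv h t := by
    filter_upwards [hdU, hdH] with t h1 h2
    rw [hgw, deriv_fun_sub h1 (h2.const_mul C), deriv_const_mul C h2]
  have hd2GW : DifferentiableAt ℝ (deriv gw) 0 := by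
    refine hderiv_eq.differentiableAt_iff.2 ?_
    exact hd2U.sub (hd2H.const_mul C)
  have hval : deriv (deriv gw) 0 = deriv (deriv gu) 0 - C * deriv (deriv h) 0 := by
    rw [hderiv_eq.deriv_eq, deriv_fun_sub hd2U (hd2H.const_mul C), deriv_const_mul C hd2H]
  have htest := secondDerivTest hmaxgw hdGW hd2GW
  rw [hval] at htest
  rw [← heqU]
  calc deriv (deriv gu) 0 ≤ C * deriv (deriv h) 0 := by linarith
    _ = _ := by rw [hvalH]

noncomputable def lap (f : EuclideanSpace ℝ (Fin 2) → ℝ) (x : EuclideanSpace ℝ (Fin 2)) : ℝ :=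
  ∑ i : Fin 2, fderiv ℝ (fun y => fderiv ℝ f y (EuclideanSpace.single i 1)) x
    (EuclideanSpace.single i 1)

theorem stmt17 (ω l r α : ℝ) (hω : 0 < ω) (hr : 0 < r) (hα : 0 < α)
    (hrcond : (l + Real.sqrt (l ^ 2 + 4 * α ^ 2 * ω ^ 2)) / (2 * ω ^ 2) ≤ r ^ 2)
    (W u : EuclideanSpace ℝ (Fin 2) → ℝ)
    (hW : ∀ x, r ≤ ‖x‖ → ω ^ 2 * ‖x‖ ^ 2 ≤ W x)
    (hu : ContDiffOn ℝ 2 u {x | r ≤ ‖x‖})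
    (hupos : ∀ x, r ≤ ‖x‖ → 0 < u x)
    (hu0 : Tendsto u (cocompact (EuclideanSpace ℝ (Fin 2))) (nhds 0))
    (hpde : ∀ x, r ≤ ‖x‖ → -lap u x + W x * u x = l * u x) :
    ∀ x, r ≤ ‖x‖ →
      u x ≤ sSup (u '' Metric.sphere (0 : EuclideanSpace ℝ (Fin 2)) r) * (r / ‖x‖) ^ α := by
  -- algebraic consequences of hrcond
  set A := Real.sqrt (l ^ 2 + 4 * α ^ 2 * ω ^ 2) with hAdef
  have hA0 : 0 ≤ A := Real.sqrt_nonneg _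
  have hA2 : A ^ 2 = l ^ 2 + 4 * α ^ 2 * ω ^ 2 := Real.sq_sqrt (by positivity)
  have h1 : l + A ≤ 2 * ω ^ 2 * r ^ 2 := by
    rw [div_le_iff₀ (by positivity)] at hrcond; linarith
  have hlA : l < A := by nlinarith [hA2, hA0, sq_nonneg α, sq_nonneg ω, mul_pos hα hω]
  have hrl : l < ω ^ 2 * r ^ 2 := by nlinarith
  have hkey : α ^ 2 ≤ (ω ^ 2 * r ^ 2 - l) * r ^ 2 := by
    have h2 : 0 ≤ 2 * ω ^ 2 * r ^ 2 - l - A := by linarith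
    have h3 : 0 ≤ 2 * ω ^ 2 * r ^ 2 - l + A := by linarith
    have hω2 : (0:ℝ) < ω ^ 2 := by positivity
    nlinarith [mul_nonneg h2 h3, hA2, hω2]
  -- supremum on the sphere
  set M := sSup (u '' Metric.sphere (0: EuclideanSpace ℝ (Fin 2)) r) with hMdef
  have hsne : (Metric.sphere (0: EuclideanSpace ℝ (Fin 2)) r).Nonempty := NormedSpace.sphere_nonempty.mpr hr.le
  have hsphsub : Metric.sphere (0: EuclideanSpace ℝ (Fin 2)) r ⊆ {x : EuclideanSpace ℝ (Fin 2) | r ≤ ‖x‖} := by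
    intro y hy
    rw [mem_sphere_zero_iff_norm] at hy
    simp [hy]
  have hcont : ContinuousOn u {x : EuclideanSpace ℝ (Fin 2) | r ≤ ‖x‖} := hu.continuousOn
  have himg : IsCompact (u '' Metric.sphere (0: EuclideanSpace ℝ (Fin 2)) r) :=
    (isCompact_sphere (0 : EuclideanSpace ℝ (Fin 2)) r).image_of_continuousOn (hcont.mono hsphsub)
  have hMmem : M ∈ u '' Metric.sphere (0: EuclideanSpace ℝ (Fin 2)) r := himg.sSup_mem (hsne.image u)
  have hMpos : 0 < M := by
    obtain ⟨y, hy, hyM⟩ := hMmem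
    rw [← hyM]
    exact hupos y (hsphsub hy)
  have hub : ∀ y ∈ Metric.sphere (0: EuclideanSpace ℝ (Fin 2)) r, u y ≤ M := fun y hy =>
    le_csSup himg.bddAbove ⟨y, hy, rfl⟩
  set C := M * r ^ α with hCdef
  have hCpos : 0 < C := mul_pos hMpos (rpow_pos_of_pos hr α)
  set f : EuclideanSpace ℝ (Fin 2) → ℝ := fun y => M * (r / ‖y‖) ^ α with hfdef
  -- coordinate formula for f
  have hfeq : ∀ y : EuclideanSpace ℝ (Fin 2), f y = C * ((y 0) ^ 2 + (y 1) ^ 2) ^ (-α/2 : ℝ) := by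
    intro y
    have hnorm : ‖y‖ = Real.sqrt ((y 0) ^ 2 + (y 1) ^ 2) := by
      rw [EuclideanSpace.norm_eq]
      simp [Fin.sum_univ_two, Real.norm_eq_abs, sq_abs]
    have hsnn : (0:ℝ) ≤ (y 0) ^ 2 + (y 1) ^ 2 := by positivity
    rcases eq_or_lt_of_le hsnn with h0 | hpos
    · rw [hfdef]
      simp only [hnorm, ← h0, Real.sqrt_zero, div_zero]
      rw [Real.zero_rpow (ne_of_gt hα), Real.zero_rpow (by linarith : (-α/2:ℝ) ≠ 0)]
      ring
    · have hny : 0 < ‖y‖ := by rw [hnorm]; exact Real.sqrt_pos.2 hpos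
      rw [hfdef]
      simp only
      rw [Real.div_rpow hr.le (norm_nonneg y)]
      have h1 : ‖y‖ ^ (α:ℝ) = ((y 0)^2+(y 1)^2) ^ (α/2 : ℝ) := by
        rw [hnorm, Real.sqrt_eq_rpow, ← Real.rpow_mul hsnn, one_div_mul_eq_div]
      rw [h1, hCdef, div_eq_mul_inv, ← Real.rpow_neg hsnn, neg_div]
      ring
  -- main contradiction argument
  intro x hx
  by_contra hcon
  push_neg at hcon
  set w : EuclideanSpace ℝ (Fin 2) → ℝ := fun y => u y - f y with hwdef
  have hwx : 0 < w x := by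
    have : f x < u x := hcon
    simp only [hwdef]
    linarith
  have hnorm_top : Tendsto (fun y : EuclideanSpace ℝ (Fin 2) => ‖y‖)
      (cocompact (EuclideanSpace ℝ (Fin 2))) atTop := tendsto_norm_cocompact_atTop
  have hf0 : Tendsto f (cocompact (EuclideanSpace ℝ (Fin 2))) (nhds 0) := by
    have h1 : Tendsto (fun y : EuclideanSpace ℝ (Fin 2) => M * r ^ α * ‖y‖ ^ (-α : ℝ))
        (cocompact (EuclideanSpace ℝ (Fin 2))) (nhds 0) := by
      have h2 := ((tendsto_rpow_neg_atTop hα).comp hnorm_top).const_mul (M * r ^ α)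
      simpa using h2
    refine Tendsto.congr' ?_ h1
    filter_upwards [hnorm_top.eventually (eventually_ge_atTop r)] with y hy
    have hny : 0 < ‖y‖ := lt_of_lt_of_le hr hy
    rw [hfdef]
    simp only
    rw [Real.div_rpow hr.le (norm_nonneg y), Real.rpow_neg (norm_nonneg y)]
    ring
  have hw0 : Tendsto w (cocompact (EuclideanSpace ℝ (Fin 2))) (nhds 0) := by
    have := hu0.sub hf0
    simpa using this
  have hev : {y : EuclideanSpace ℝ (Fin 2) | w y < w x / 2}
      ∈ cocompact (EuclideanSpace ℝ (Fin 2)) := hw0 (Iio_mem_nhds (half_pos hwx))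
  rw [mem_cocompact] at hev
  obtain ⟨K, hK, hKsub⟩ := hev
  obtain ⟨R, hRsub⟩ := hK.isBounded.subset_closedBall 0
  have hout : ∀ y : EuclideanSpace ℝ (Fin 2), R < ‖y‖ → w y < w x / 2 := by
    intro y hy
    have hyK : y ∉ K := by
      intro hyK
      have := hRsub hyK
      rw [Metric.mem_closedBall, dist_zero_right] at this
      linarith
    exact hKsub hyK
  set R' := max R (max ‖x‖ r) with hR'def
  set S := Metric.closedBall (0 : EuclideanSpace ℝ (Fin 2)) R'
      ∩ {y : EuclideanSpace ℝ (Fin 2) | r ≤ ‖y‖} with hSdef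
  have hSc : IsCompact S :=
    (isCompact_closedBall _ _).inter_right (isClosed_le continuous_const continuous_norm)
  have hxS : x ∈ S := by
    constructor
    · rw [Metric.mem_closedBall, dist_zero_right]
      exact le_trans (le_max_left _ _) (le_max_right _ _)
    · exact hx
  have hfc : ContinuousOn f {y : EuclideanSpace ℝ (Fin 2) | r ≤ ‖y‖} := by
    have hdiv : ContinuousOn (fun y : EuclideanSpace ℝ (Fin 2) => r / ‖y‖)
        {y : EuclideanSpace ℝ (Fin 2) | r ≤ ‖y‖} :=
      continuousOn_const.div continuous_norm.continuousOn
        (fun y hy => ne_of_gt (lt_of_lt_of_le hr hy))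
    exact continuousOn_const.mul (hdiv.rpow_const fun y hy => Or.inr hα.le)
  have hwc : ContinuousOn w S := (hcont.sub hfc).mono Set.inter_subset_right
  obtain ⟨z, hzS, hzmax⟩ := hSc.exists_isMaxOn ⟨x, hxS⟩ hwc
  have hwz : w x ≤ w z := hzmax hxS
  have hwzpos : 0 < w z := lt_of_lt_of_le hwx hwz
  have hrz_le : r ≤ ‖z‖ := hzS.2
  have hglob : ∀ y : EuclideanSpace ℝ (Fin 2), r ≤ ‖y‖ → w y ≤ w z := by
    intro y hy
    by_cases hcase : ‖y‖ ≤ R'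
    · refine hzmax ⟨?_, hy⟩
      rw [Metric.mem_closedBall, dist_zero_right]
      exact hcase
    · push_neg at hcase
      have hRy : R < ‖y‖ := lt_of_le_of_lt (le_max_left _ _) hcase
      have h5 := hout y hRy
      have h6 : w x / 2 < w x := half_lt_self hwx
      exact le_of_lt (lt_of_lt_of_le (lt_trans h5 h6) hwz)
  have hrz : r < ‖z‖ := by
    rcases lt_or_eq_of_le hrz_le with h | h
    · exact h
    · exfalso
      have hzsph : z ∈ Metric.sphere (0 : EuclideanSpace ℝ (Fin 2)) r := by
        rw [mem_sphere_zero_iff_norm]; exact h.symm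
      have huM : u z ≤ M := hub z hzsph
      have hfzM : f z = M := by
        rw [hfdef]
        simp only
        rw [← h, div_self (ne_of_gt hr), Real.one_rpow, mul_one]
      have : w z ≤ 0 := by
        simp only [hwdef, hfzM]
        linarith
      linarith
  have hopen : IsOpen {y : EuclideanSpace ℝ (Fin 2) | r < ‖y‖} :=
    isOpen_lt continuous_const continuous_norm
  have hmemz : {y : EuclideanSpace ℝ (Fin 2) | r < ‖y‖} ∈ nhds z := hopen.mem_nhds hrz
  have hlocmax : IsLocalMax (fun y => u y - f y) z :=
    Filter.eventually_of_mem hmemz fun y hy => hglob y (le_of_lt hy)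
  have hCD : ∀ᶠ y in nhds z, ContDiffAt ℝ 2 u y :=
    Filter.eventually_of_mem hmemz fun y hy =>
      hu.contDiffAt (Filter.mem_of_superset (hopen.mem_nhds hy) fun p hp => show r ≤ ‖p‖ from le_of_lt hp)
  -- coordinates at z
  have hnz : ‖z‖ = Real.sqrt (z 0 ^ 2 + z 1 ^ 2) := by
    rw [EuclideanSpace.norm_eq]
    simp [Fin.sum_univ_two, Real.norm_eq_abs, sq_abs]
  have hs2 : ‖z‖ ^ 2 = z 0 ^ 2 + z 1 ^ 2 := by
    rw [hnz, Real.sq_sqrt (by positivity)]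
  have hsge : r ^ 2 ≤ z 0 ^ 2 + z 1 ^ 2 := by
    rw [← hs2]
    exact pow_le_pow_left₀ hr.le hrz_le 2
  have hspos : 0 < z 0 ^ 2 + z 1 ^ 2 := lt_of_lt_of_le (by positivity) hsge
  -- per-direction estimates
  have hnorm0 : ∀ t : ℝ, f (z + t • EuclideanSpace.single (0 : Fin 2) (1:ℝ)) =
      C * ((z 0 + t) ^ 2 + (z 1) ^ 2) ^ (-α/2 : ℝ) := by
    intro t
    rw [hfeq]
    simp [PiLp.add_apply, PiLp.smul_apply, EuclideanSpace.single_apply]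
  have hnorm1 : ∀ t : ℝ, f (z + t • EuclideanSpace.single (1 : Fin 2) (1:ℝ)) =
      C * ((z 1 + t) ^ 2 + (z 0) ^ 2) ^ (-α/2 : ℝ) := by
    intro t
    rw [hfeq]
    rw [show (z 1 + t) ^ 2 + (z 0) ^ 2 = (z 0) ^ 2 + (z 1 + t) ^ 2 from add_comm _ _]
    simp [PiLp.add_apply, PiLp.smul_apply, EuclideanSpace.single_apply]
  have key0 := perDirection (v := EuclideanSpace.single (0 : Fin 2) (1:ℝ)) hα hspos hnorm0 hCD hlocmax
  have key1 := perDirection (v := EuclideanSpace.single (1 : Fin 2) (1:ℝ)) hα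
    (by linarith : (0:ℝ) < z 1 ^ 2 + z 0 ^ 2) hnorm1 hCD hlocmax
  rw [show z 1 ^ 2 + z 0 ^ 2 = z 0 ^ 2 + z 1 ^ 2 from add_comm _ _] at key1
  have hlap : lap u z =
      fderiv ℝ (fun y => fderiv ℝ u y (EuclideanSpace.single (0 : Fin 2) (1:ℝ))) z
        (EuclideanSpace.single (0 : Fin 2) (1:ℝ)) +
      fderiv ℝ (fun y => fderiv ℝ u y (EuclideanSpace.single (1 : Fin 2) (1:ℝ))) z
        (EuclideanSpace.single (1 : Fin 2) (1:ℝ)) := by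
    rw [lap, Fin.sum_univ_two]
  have hP : (z 0 ^ 2 + z 1 ^ 2) ^ (-α/2-2 : ℝ) * (z 0 ^ 2 + z 1 ^ 2)
      = (z 0 ^ 2 + z 1 ^ 2) ^ (-α/2-1 : ℝ) := by
    rw [← Real.rpow_add_one (ne_of_gt hspos)]
    ring_nf
  have hsum : lap u z ≤ C * α ^ 2 * (z 0 ^ 2 + z 1 ^ 2) ^ (-α/2-1 : ℝ) := by
    rw [hlap]
    refine le_trans (add_le_add key0 key1) (le_of_eq ?_)
    linear_combination (4 * C * (-α/2) * (-α/2-1)) * hP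
  -- lower bound from the PDE
  have hlapval : lap u z = (W z - l) * u z := by
    have h := hpde z hrz_le
    linear_combination (-1 : ℝ) * h
  have huz : 0 < u z := hupos z hrz_le
  have hfz : f z = C * (z 0 ^ 2 + z 1 ^ 2) ^ (-α/2 : ℝ) := hfeq z
  have hufz : f z < u z := by
    have := hwzpos
    simp only [hwdef] at this
    linarith
  have hWz : ω ^ 2 * (z 0 ^ 2 + z 1 ^ 2) - l ≤ W z - l := by
    have := hW z hrz_le
    rw [hs2] at this
    linarith
  have hmm : ω ^ 2 * r ^ 2 ≤ ω ^ 2 * (z 0 ^ 2 + z 1 ^ 2) :=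
    mul_le_mul_of_nonneg_left hsge (sq_nonneg ω)
  have hfac : 0 < ω ^ 2 * (z 0 ^ 2 + z 1 ^ 2) - l := by linarith
  have hstep1 : (ω ^ 2 * (z 0 ^ 2 + z 1 ^ 2) - l) * u z ≤ lap u z := by
    rw [hlapval]
    exact mul_le_mul_of_nonneg_right hWz huz.le
  have hstep2 : (ω ^ 2 * (z 0 ^ 2 + z 1 ^ 2) - l) * f z
      < (ω ^ 2 * (z 0 ^ 2 + z 1 ^ 2) - l) * u z :=
    mul_lt_mul_of_pos_left hufz hfac
  have halg : α ^ 2 ≤ (ω ^ 2 * (z 0 ^ 2 + z 1 ^ 2) - l) * (z 0 ^ 2 + z 1 ^ 2) := by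
    have h7 : (ω ^ 2 * r ^ 2 - l) * r ^ 2 ≤ (ω ^ 2 * (z 0 ^ 2 + z 1 ^ 2) - l) * (z 0 ^ 2 + z 1 ^ 2) :=
      mul_le_mul (by linarith) hsge (by positivity) (by linarith)
    linarith
  have hQ : (z 0 ^ 2 + z 1 ^ 2) ^ (-α/2-1 : ℝ) * (z 0 ^ 2 + z 1 ^ 2)
      = (z 0 ^ 2 + z 1 ^ 2) ^ (-α/2 : ℝ) := by
    rw [← Real.rpow_add_one (ne_of_gt hspos)]
    ring_nf
  have hstep3 : C * α ^ 2 * (z 0 ^ 2 + z 1 ^ 2) ^ (-α/2-1 : ℝ)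
      ≤ (ω ^ 2 * (z 0 ^ 2 + z 1 ^ 2) - l) * f z := by
    rw [hfz]
    have hrpow_nn : (0:ℝ) ≤ (z 0 ^ 2 + z 1 ^ 2) ^ (-α/2-1 : ℝ) := Real.rpow_nonneg hspos.le _
    calc C * α ^ 2 * (z 0 ^ 2 + z 1 ^ 2) ^ (-α/2-1 : ℝ)
        ≤ C * ((ω ^ 2 * (z 0 ^ 2 + z 1 ^ 2) - l) * (z 0 ^ 2 + z 1 ^ 2))
          * (z 0 ^ 2 + z 1 ^ 2) ^ (-α/2-1 : ℝ) := by
          apply mul_le_mul_of_nonneg_right _ hrpow_nn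
          exact mul_le_mul_of_nonneg_left halg hCpos.le
      _ = (ω ^ 2 * (z 0 ^ 2 + z 1 ^ 2) - l) * (C * (z 0 ^ 2 + z 1 ^ 2) ^ (-α/2 : ℝ)) := by
          rw [← hQ]; ring
  linarith [hsum, hstep1, hstep2, hstep3]
end

section
/- Let u, v be continuous real functions on ℝ², u supported in the closed half-plane {x·ν ≥ a} and v supported in {x·ν' ≥ b} with |ν| = |ν'| = 1, u > 0 on {x·ν > a}, v > 0 on {x·ν' > b}, and u·v = 0 everywhere. If additionally the common zero set {u = 0} ∩ {v = 0} has empty interior, then ν' = −ν and b = −a; i.e., the supports are exactly complementary closed half-planes. -/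
/-!
Where both `u` and `v` are positive their product cannot vanish, so the open half-planes
`{a < ⟪x, ν⟫}` and `{b < ⟪x, ν'⟫}` are disjoint. The intersection of the complementary open
half-planes `{⟪x, ν⟫ < a}` and `{⟪x, ν'⟫ < b}` is an open subset of the common zero set, hence
empty. Two open half-spaces with unit normals are disjoint only if the normals are
opposite, and then the two disjointness statements give `-a ≤ b` and `b ≤ -a`.
-/

open scoped RealInnerProductSpace

section Halfspaces

variable {E : Type*} [NormedAddCommGroup E] [InnerProductSpace ℝ E]

theorem eq_neg_of_disjoint_halfspaces {a b : ℝ} {ν ν' : E} (hν : ‖ν‖ = 1) (hν' : ‖ν'‖ = 1)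
    (h : Disjoint {x | a < ⟪x, ν⟫} {x | b < ⟪x, ν'⟫}) : ν' = -ν := by
  suffices hinner : ⟪ν', ν⟫ = -1 from (inner_eq_neg_one_iff_of_norm_eq_one hν' hν).mp hinner
  by_contra hne
  have hpos : 0 < 1 + ⟪ν', ν⟫ := by
    linarith [lt_of_le_of_ne (neg_one_le_real_inner_of_norm_eq_one hν' hν) (Ne.symm hne)]
  -- Along `ν + ν'` both inner products grow like `t (1 + ⟪ν', ν⟫)`, so a large multiple of it
  -- lies in both half-spaces.
  set t := (max a b + 1) / (1 + ⟪ν', ν⟫)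
  have hinner_ν : ⟪t • (ν + ν'), ν⟫ = max a b + 1 := by
    rw [real_inner_smul_left, inner_add_left, real_inner_self_eq_norm_sq, hν, one_pow,
      div_mul_cancel₀ _ hpos.ne']
  have hinner_ν' : ⟪t • (ν + ν'), ν'⟫ = max a b + 1 := by
    rw [real_inner_smul_left, inner_add_left, real_inner_self_eq_norm_sq, hν', one_pow,
      real_inner_comm, add_comm, div_mul_cancel₀ _ hpos.ne']
  exact Set.disjoint_left.mp h (show a < ⟪t • (ν + ν'), ν⟫ by linarith [le_max_left a b])
    (show b < ⟪t • (ν + ν'), ν'⟫ by linarith [le_max_right a b])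

theorem le_of_disjoint_lt_inner_inner_lt {a c : ℝ} {ν : E} (hν : ‖ν‖ = 1)
    (h : Disjoint {x | a < ⟪x, ν⟫} {x | ⟪x, ν⟫ < c}) : c ≤ a := by
  by_contra! hac
  have hinner : ⟪((a + c) / 2) • ν, ν⟫ = (a + c) / 2 := by
    rw [real_inner_smul_left, real_inner_self_eq_norm_sq, hν, one_pow, mul_one]
  exact Set.disjoint_left.mp h (show a < ⟪((a + c) / 2) • ν, ν⟫ by linarith)
    (show ⟪((a + c) / 2) • ν, ν⟫ < c by linarith)

end Halfspaces

theorem Set.eq_empty_of_isOpen_subset_of_interior_eq_empty {X : Type*} [TopologicalSpace X]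
    {s t : Set X} (hs : IsOpen s) (hst : s ⊆ t) (ht : interior t = ∅) : s = ∅ :=
  Set.subset_eq_empty (hs.subset_interior_iff.mpr hst) ht

theorem stmt19_general (a b : ℝ) (ν ν' : EuclideanSpace ℝ (Fin 2)) (hν : ‖ν‖ = 1) (hν' : ‖ν'‖ = 1)
    (u v : EuclideanSpace ℝ (Fin 2) → ℝ)
    (hsu : Function.support u ⊆ {x | a ≤ ⟪x, ν⟫})
    (hsv : Function.support v ⊆ {x | b ≤ ⟪x, ν'⟫})
    (hupos : ∀ x, a < ⟪x, ν⟫ → 0 < u x)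
    (hvpos : ∀ x, b < ⟪x, ν'⟫ → 0 < v x)
    (huv : ∀ x, u x * v x = 0)
    (hint : interior ({x | u x = 0} ∩ {x | v x = 0}) = ∅) :
    ν' = -ν ∧ b = -a := by
  have hpos : Disjoint {x | a < ⟪x, ν⟫} {x | b < ⟪x, ν'⟫} :=
    Set.disjoint_left.mpr fun x hxu hxv ↦ (mul_pos (hupos x hxu) (hvpos x hxv)).ne' (huv x)
  have hneg : Disjoint {x | ⟪x, ν⟫ < a} {x | ⟪x, ν'⟫ < b} := by
    refine Set.disjoint_iff_inter_eq_empty.mpr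
      (Set.eq_empty_of_isOpen_subset_of_interior_eq_empty ?_ ?_ hint)
    · exact (isOpen_lt (by fun_prop) continuous_const).inter
        (isOpen_lt (by fun_prop) continuous_const)
    · rintro x ⟨hxu : ⟪x, ν⟫ < a, hxv : ⟪x, ν'⟫ < b⟩
      exact ⟨Function.notMem_support.mp fun hx ↦ not_le.mpr hxu (hsu hx),
        Function.notMem_support.mp fun hx ↦ not_le.mpr hxv (hsv hx)⟩
  have hν'_eq := eq_neg_of_disjoint_halfspaces hν hν' hpos
  subst hν'_eq
  simp only [inner_neg_right, lt_neg, neg_lt] at hpos hneg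
  have hab := le_of_disjoint_lt_inner_inner_lt hν hpos
  have hba := le_of_disjoint_lt_inner_inner_lt hν hneg.symm
  exact ⟨rfl, by linarith⟩

theorem stmt19 (a b : ℝ) (ν ν' : EuclideanSpace ℝ (Fin 2)) (hν : ‖ν‖ = 1) (hν' : ‖ν'‖ = 1)
    (u v : EuclideanSpace ℝ (Fin 2) → ℝ) (hu : Continuous u) (hv : Continuous v)
    (hsu : Function.support u ⊆ {x | a ≤ ⟪x, ν⟫})
    (hsv : Function.support v ⊆ {x | b ≤ ⟪x, ν'⟫})
    (hupos : ∀ x, a < ⟪x, ν⟫ → 0 < u x)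
    (hvpos : ∀ x, b < ⟪x, ν'⟫ → 0 < v x)
    (huv : ∀ x, u x * v x = 0)
    (hint : interior ({x | u x = 0} ∩ {x | v x = 0}) = ∅) :
    ν' = -ν ∧ b = -a :=
  stmt19_general a b ν ν' hν hν' u v hsu hsv hupos hvpos huv hint
end
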